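/- arXiv:1911.01354 — 3 statements merged into one kernel-verified Lean document; each statement's English description precedes it below -/
import Mathlib

section
/- Let P and Q be two distinct elements of the n-qubit Pauli group, each of the form of a product of Pauli-Z operators on exactly two qubits (weight-two Z-type operators). Suppose that for every qubit q there exists a weight-two X-type Pauli operator g, acting nontrivially on q, that commutes with both P and Q. Then the supports of P and Q are disjoint. -/
/-!
An `𝔽₂`-vector is determined by its support, so the two weight-two supports differ and some
qubit `r` lies in `supp P` but not in `supp Q`. Commutation means even overlap, and a
weight-two set with even overlap with another set is either disjoint from it or contained in it.
The gauge operator `g` through `r` meets `supp P` at `r`, hence `supp g = supp P`; then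
`supp P` has even overlap with `supp Q` without being contained in it, so the two are disjoint.
-/

open Finset

variable {ι : Type*} [Fintype ι]

namespace ZMod

lemma eq_of_support_eq {f g : ι → ZMod 2}
    (h : univ.filter (fun i => f i ≠ 0) = univ.filter (fun i => g i ≠ 0)) : f = g := by
  funext i
  have hi : f i ≠ 0 ↔ g i ≠ 0 := by simpa using congrArg (i ∈ ·) h
  revert hi
  generalize f i = a
  generalize g i = b
  revert a b
  decide

lemma sum_mul_eq_card_inter_support [DecidableEq ι] (f g : ι → ZMod 2) :
    ∑ i, f i * g i =
      (#(univ.filter (fun i => f i ≠ 0) ∩ univ.filter (fun i => g i ≠ 0)) : ZMod 2) := by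
  have hmul : ∀ a b : ZMod 2, a * b = if a ≠ 0 ∧ b ≠ 0 then 1 else 0 := by decide
  simp_rw [hmul, sum_boole, filter_and]

lemma even_card_inter_support_of_sum_mul_eq_zero [DecidableEq ι] {f g : ι → ZMod 2}
    (h : ∑ i, f i * g i = 0) :
    Even #(univ.filter (fun i => f i ≠ 0) ∩ univ.filter (fun i => g i ≠ 0)) := by
  rwa [sum_mul_eq_card_inter_support, natCast_eq_zero_iff_even] at h

end ZMod

namespace Finset

lemma disjoint_or_subset_of_card_eq_two_of_even_card_inter {α : Type*} [DecidableEq α]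
    {A B : Finset α} (hA : #A = 2) (heven : Even #(A ∩ B)) : Disjoint A B ∨ A ⊆ B := by
  have hle : #(A ∩ B) ≤ 2 := hA ▸ card_le_card inter_subset_left
  obtain h0 | h2 : #(A ∩ B) = 0 ∨ #(A ∩ B) = 2 := by
    obtain ⟨k, hk⟩ := heven
    omega
  · exact .inl (disjoint_iff_inter_eq_empty.mpr (card_eq_zero.mp h0))
  · exact .inr (inter_eq_left.mp (eq_of_subset_of_card_le inter_subset_left (by omega)))

end Finset

/-- Z-type (X-type) Pauli operators are encoded by their `𝔽₂`-vectors of Z- (X-) positions;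
an X-type and a Z-type operator commute iff the dot product of their vectors vanishes. -/
theorem disjoint_supports_of_two_local_Z_type
    (n : ℕ) (Pz Qz : Fin n → ZMod 2)
    (hPwt : (Finset.univ.filter fun q : Fin n => Pz q ≠ 0).card = 2)
    (hQwt : (Finset.univ.filter fun q : Fin n => Qz q ≠ 0).card = 2)
    (hne : Pz ≠ Qz)
    (hgauge : ∀ q : Fin n, ∃ gx : Fin n → ZMod 2,
      (Finset.univ.filter fun p : Fin n => gx p ≠ 0).card = 2 ∧
      gx q ≠ 0 ∧
      (∑ p : Fin n, gx p * Pz p = 0) ∧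
      (∑ p : Fin n, gx p * Qz p = 0)) :
    Disjoint {q : Fin n | Pz q ≠ 0} {q : Fin n | Qz q ≠ 0} := by
  set SP := univ.filter fun q : Fin n => Pz q ≠ 0
  set SQ := univ.filter fun q : Fin n => Qz q ≠ 0
  have hPQ : ¬ SP ⊆ SQ := fun hsub =>
    hne (ZMod.eq_of_support_eq (eq_of_subset_of_card_le hsub (by rw [hPwt, hQwt])))
  obtain ⟨r, hrP, -⟩ := not_subset.mp hPQ
  obtain ⟨gx, hgwt, hgr, hgP, hgQ⟩ := hgauge r
  have hgSP : univ.filter (fun p => gx p ≠ 0) = SP := by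
    have hsub := (disjoint_or_subset_of_card_eq_two_of_even_card_inter hgwt
      (ZMod.even_card_inter_support_of_sum_mul_eq_zero hgP)).resolve_left
      (not_disjoint_iff.mpr ⟨r, by simpa using hgr, hrP⟩)
    exact eq_of_subset_of_card_le hsub (by rw [hPwt, hgwt])
  have hdisj : Disjoint SP SQ := (disjoint_or_subset_of_card_eq_two_of_even_card_inter hPwt
    (hgSP ▸ ZMod.even_card_inter_support_of_sum_mul_eq_zero hgQ)).resolve_right hPQ
  simpa [SP, SQ] using disjoint_coe.mpr hdisj
end

section
/- For every k ≥ 1, the (2k+1)×(2k+1) matrix A over 𝔽₂ defined as follows: for 1 ≤ i ≤ 2k, row i has exactly two ones, one in column 1 and one in column i+1, and row 2k+1 has ones in columns 2 through 2k+1 (and zeros elsewhere), has: (a) Hamming weight |A| = 6k, (b) rank 2k over 𝔽₂, and (c) every nonzero vector in the row space and every nonzero vector in the column space has Hamming weight at least 2. -/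
/-- In `ZMod 2`, a vector whose entries sum to zero and which is nonzero has
Hamming weight at least `2`. -/
lemma bacon_shor_weight_ge_two {n : ℕ} (y : Fin n → ZMod 2) (hsum : ∑ j, y j = 0)
    (hy : y ≠ 0) : 2 ≤ (Finset.univ.filter fun j => y j ≠ 0).card := by
  set S := Finset.univ.filter fun j => y j ≠ 0 with hS
  have hone : ∀ a : ZMod 2, a ≠ 0 → a = 1 := by decide
  have hcast : (S.card : ZMod 2) = 0 := by
    have h1 : ∑ j ∈ S, y j = ∑ j, y j := by
      rw [hS]; exact Finset.sum_filter_ne_zero _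
    have h2 : ∑ j ∈ S, y j = S.card := by
      rw [Finset.sum_congr rfl (fun j hj => hone _ (Finset.mem_filter.mp hj).2)]
      simp [hS]
    rw [← h2, h1, hsum]
  have hdvd : 2 ∣ S.card := (ZMod.natCast_eq_zero_iff _ 2).mp hcast
  have hne : S.Nonempty := by
    obtain ⟨j, hj⟩ := Function.ne_iff.mp hy
    exact ⟨j, Finset.mem_filter.mpr ⟨Finset.mem_univ _, hj⟩⟩
  have := Finset.card_pos.mpr hne
  omega

/-- Counting elements of a `Fin`-filter via the corresponding `range`-filter. -/
lemma bacon_shor_fin_filter_card {n : ℕ} (P : ℕ → Prop) [DecidablePred P] :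
    (Finset.univ.filter fun i : Fin n => P i.val).card
      = ((Finset.range n).filter P).card := by
  rw [Finset.card_filter, Finset.card_filter]
  exact Fin.sum_univ_eq_sum_range (fun i => if P i then 1 else 0) n

open Matrix in
/-- The binary matrix `A` defining the paper's generalized Bacon–Shor code:
rows `1..2k` have ones exactly in columns `1` and `i+1`, and row `2k+1` has
ones exactly in columns `2..2k+1`.  Then (a) the Hamming weight of `A` is
`6k`, (b) `A` has rank `2k` over `𝔽₂`, and (c) every nonzero vector in the row
space and in the column space of `A` has Hamming weight at least `2`. -/
theorem bacon_shor_matrix_properties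
    (k : ℕ) (hk : 1 ≤ k)
    (A : Matrix (Fin (2 * k + 1)) (Fin (2 * k + 1)) (ZMod 2))
    (hA : ∀ i j : Fin (2 * k + 1),
      A i j = if i.val < 2 * k then
                (if j.val = 0 ∨ j.val = i.val + 1 then 1 else 0)
              else
                (if j.val ≠ 0 then 1 else 0)) :
    (Finset.univ.filter
        fun p : Fin (2 * k + 1) × Fin (2 * k + 1) => A p.1 p.2 ≠ 0).card = 6 * k ∧
    A.rank = 2 * k ∧
    (∀ x : Fin (2 * k + 1) → ZMod 2, A.vecMul x ≠ 0 →
      2 ≤ (Finset.univ.filter fun j => A.vecMul x j ≠ 0).card) ∧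
    (∀ x : Fin (2 * k + 1) → ZMod 2, A.mulVec x ≠ 0 →
      2 ≤ (Finset.univ.filter fun i => A.mulVec x i ≠ 0).card) := by
  -- uniform 0/1 description of the matrix
  have hA01 : ∀ i j, A i j = if (i.val < 2 * k ∧ (j.val = 0 ∨ j.val = i.val + 1))
      ∨ (¬ i.val < 2 * k ∧ j.val ≠ 0) then 1 else 0 := by
    intro i j; rw [hA]; split_ifs <;> tauto
  -- row weights
  have hrowcard : ∀ i : Fin (2 * k + 1),
      (Finset.univ.filter fun j : Fin (2 * k + 1) =>
        (i.val < 2 * k ∧ (j.val = 0 ∨ j.val = i.val + 1))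
          ∨ (¬ i.val < 2 * k ∧ j.val ≠ 0)).card = if i.val < 2 * k then 2 else 2 * k := by
    intro i
    rw [bacon_shor_fin_filter_card (fun jv => (i.val < 2 * k ∧ (jv = 0 ∨ jv = i.val + 1))
          ∨ (¬ i.val < 2 * k ∧ jv ≠ 0))]
    by_cases hi : i.val < 2 * k
    · rw [if_pos hi]
      have : ((Finset.range (2*k+1)).filter fun jv =>
          (i.val < 2 * k ∧ (jv = 0 ∨ jv = i.val + 1)) ∨ (¬ i.val < 2 * k ∧ jv ≠ 0))
          = {0, i.val + 1} := by
        ext jv; simp only [Finset.mem_filter, Finset.mem_range, Finset.mem_insert,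
          Finset.mem_singleton]
        omega
      rw [this, Finset.card_pair (by omega)]
    · rw [if_neg hi]
      have : ((Finset.range (2*k+1)).filter fun jv =>
          (i.val < 2 * k ∧ (jv = 0 ∨ jv = i.val + 1)) ∨ (¬ i.val < 2 * k ∧ jv ≠ 0))
          = Finset.Ico 1 (2*k+1) := by
        ext jv; simp only [Finset.mem_filter, Finset.mem_range, Finset.mem_Ico]
        omega
      rw [this, Nat.card_Ico]; omega
  -- column weights
  have hcolcard : ∀ j : Fin (2 * k + 1),
      (Finset.univ.filter fun i : Fin (2 * k + 1) =>
        (i.val < 2 * k ∧ (j.val = 0 ∨ j.val = i.val + 1))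
          ∨ (¬ i.val < 2 * k ∧ j.val ≠ 0)).card = if j.val = 0 then 2 * k else 2 := by
    intro j
    rw [bacon_shor_fin_filter_card (fun iv => (iv < 2 * k ∧ (j.val = 0 ∨ j.val = iv + 1))
          ∨ (¬ iv < 2 * k ∧ j.val ≠ 0))]
    have hj := j.isLt
    by_cases hj0 : j.val = 0
    · rw [if_pos hj0]
      have : ((Finset.range (2*k+1)).filter fun iv =>
          (iv < 2 * k ∧ (j.val = 0 ∨ j.val = iv + 1)) ∨ (¬ iv < 2 * k ∧ j.val ≠ 0))
          = Finset.range (2*k) := by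
        ext iv; simp only [Finset.mem_filter, Finset.mem_range]; omega
      rw [this, Finset.card_range]
    · rw [if_neg hj0]
      have : ((Finset.range (2*k+1)).filter fun iv =>
          (iv < 2 * k ∧ (j.val = 0 ∨ j.val = iv + 1)) ∨ (¬ iv < 2 * k ∧ j.val ≠ 0))
          = {j.val - 1, 2 * k} := by
        ext iv; simp only [Finset.mem_filter, Finset.mem_range, Finset.mem_insert,
          Finset.mem_singleton]
        omega
      rw [this, Finset.card_pair (by omega)]
  -- row and column sums vanish over 𝔽₂
  have h2z : (2 : ZMod 2) = 0 := by decide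
  have h2k : ((2 * k : ℕ) : ZMod 2) = 0 :=
    (ZMod.natCast_eq_zero_iff _ 2).mpr ⟨k, rfl⟩
  have hrow : ∀ i, ∑ j, A i j = 0 := by
    intro i
    simp_rw [hA01 i]
    rw [Finset.sum_boole, hrowcard i]
    split_ifs <;> simp [h2k, h2z]
  have hcol : ∀ j, ∑ i, A i j = 0 := by
    intro j
    simp_rw [fun i => hA01 i j]
    rw [Finset.sum_boole, hcolcard j]
    split_ifs <;> simp [h2k, h2z]
  have hvm : ∀ x : Fin (2 * k + 1) → ZMod 2, ∑ j, A.vecMul x j = 0 := by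
    intro x
    simp only [Matrix.vecMul, dotProduct]
    rw [Finset.sum_comm]
    simp_rw [← Finset.mul_sum]
    simp [hrow]
  have hmv : ∀ x : Fin (2 * k + 1) → ZMod 2, ∑ i, A.mulVec x i = 0 := by
    intro x
    simp only [Matrix.mulVec, dotProduct]
    rw [Finset.sum_comm]
    simp_rw [← Finset.sum_mul]
    simp [hcol]
  refine ⟨?_, ?_, ?_, ?_⟩
  · -- (a) Hamming weight
    have hfilter : (Finset.univ.filter
        fun p : Fin (2 * k + 1) × Fin (2 * k + 1) => A p.1 p.2 ≠ 0)
        = Finset.univ.filter fun p : Fin (2 * k + 1) × Fin (2 * k + 1) =>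
          (p.1.val < 2 * k ∧ (p.2.val = 0 ∨ p.2.val = p.1.val + 1))
            ∨ (¬ p.1.val < 2 * k ∧ p.2.val ≠ 0) := by
      apply Finset.filter_congr
      intro p _
      rw [hA01]
      split_ifs with h <;> simp [h] <;> simp only [Fin.ext_iff, Fin.val_zero] at * <;> omega
    rw [hfilter, Finset.card_filter, Fintype.sum_prod_type]
    have : ∀ i : Fin (2*k+1),
        (∑ j : Fin (2*k+1), if (i.val < 2 * k ∧ (j.val = 0 ∨ j.val = i.val + 1))
          ∨ (¬ i.val < 2 * k ∧ j.val ≠ 0) then 1 else 0) = if i.val < 2 * k then 2 else 2 * k := by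
      intro i
      rw [← Finset.card_filter]
      exact hrowcard i
    rw [Finset.sum_congr rfl fun i _ => this i]
    rw [Fin.sum_univ_eq_sum_range (fun iv => if iv < 2 * k then 2 else 2 * k) (2*k+1)]
    rw [Finset.range_add_one, Finset.sum_insert (by simp)]
    rw [if_neg (by omega)]
    rw [Finset.sum_congr rfl (fun i hi => if_pos (Finset.mem_range.mp hi))]
    rw [Finset.sum_const, Finset.card_range, smul_eq_mul]
    omega
  · -- (b) rank
    have hker1 : A.vecMul (fun _ => 1) = 0 := by
      funext j
      simp only [Matrix.vecMul, dotProduct, one_mul, Pi.zero_apply]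
      exact hcol j
    have hub : A.rank ≤ 2 * k := by
      rw [← A.rank_transpose]
      have hrn := LinearMap.finrank_range_add_finrank_ker (Aᵀ.mulVecLin)
      rw [Module.finrank_fin_fun] at hrn
      have hmem : (fun _ : Fin (2*k+1) => (1 : ZMod 2)) ∈ LinearMap.ker Aᵀ.mulVecLin := by
        rw [LinearMap.mem_ker, Matrix.mulVecLin_apply, Matrix.mulVec_transpose]
        exact hker1
      have hpos : 0 < Module.finrank (ZMod 2) (LinearMap.ker Aᵀ.mulVecLin) := by
        rw [Module.finrank_pos_iff_exists_ne_zero]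
        refine ⟨⟨_, hmem⟩, ?_⟩
        intro h
        have := congrFun (congrArg Subtype.val h) 0
        simp at this
      have : Aᵀ.rank = Module.finrank (ZMod 2) (LinearMap.range Aᵀ.mulVecLin) := rfl
      omega
    have hlb : 2 * k ≤ A.rank := by
      set v : Fin (2 * k) → (Fin (2 * k + 1) → ZMod 2) :=
        fun j i => A i ⟨j.val + 1, by omega⟩ with hv
      have hli : LinearIndependent (ZMod 2) v := by
        rw [Fintype.linearIndependent_iff]
        intro g hg j
        have h1 := congrFun hg ⟨j.val, by omega⟩
        simp only [Finset.sum_apply, Pi.smul_apply, smul_eq_mul, Pi.zero_apply, hv] at h1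
        have h2 : ∀ j' : Fin (2 * k),
            A ⟨j.val, by omega⟩ ⟨j'.val + 1, by omega⟩ = if j' = j then 1 else 0 := by
          intro j'
          rw [hA01]
          have := j.isLt
          have := j'.isLt
          split_ifs with h h' h' <;> simp only [Fin.ext_iff, false_or] at * <;> omega
        rw [Finset.sum_congr rfl (fun j' _ => by rw [h2 j'])] at h1
        simpa [Finset.sum_ite_eq'] using h1
      have hsub : Submodule.span (ZMod 2) (Set.range v)
          ≤ Submodule.span (ZMod 2) (Set.range Aᵀ) := by
        apply Submodule.span_mono
        rintro _ ⟨j, rfl⟩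
        exact ⟨⟨j.val + 1, by omega⟩, rfl⟩
      have hcard := finrank_span_eq_card hli
      rw [Fintype.card_fin] at hcard
      rw [Matrix.rank_eq_finrank_span_cols, show A.col = Aᵀ from rfl]
      have := Submodule.finrank_mono (R := ZMod 2) hsub
      omega
    omega
  · -- (c) row space
    intro x hx
    exact bacon_shor_weight_ge_two _ (hvm x) hx
  · -- (c) column space
    intro x hx
    exact bacon_shor_weight_ge_two _ (hmv x) hx
end

section
/- Let G be a subgroup of the n-qubit Pauli group and suppose every element of the stabilizer S = G ∩ Z(G) (where Z(G) is the centralizer of G in the Pauli group) that is a nontrivial Pauli operator has weight at least 2, and suppose for every qubit q and every single-qubit Pauli error σ ∈ {X_q, Y_q, Z_q} there is an element of S anticommuting with σ. Then every qubit q is in the support of at least two elements of any generating set of G whose restrictions to q anticommute. -/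
/-- Pauli operators on `n` qubits, represented symplectically (modulo phases)
as a pair of `𝔽₂` vectors: the X-part and the Z-part. -/
abbrev PauliVec (n : ℕ) := (Fin n → ZMod 2) × (Fin n → ZMod 2)

/-- The symplectic form: two Pauli operators commute iff it vanishes, and
anticommute iff it equals `1`. -/
def omega {n : ℕ} (P Q : PauliVec n) : ZMod 2 :=
  ∑ q : Fin n, (P.1 q * Q.2 q + P.2 q * Q.1 q)

private lemma zmod2_ne_one_eq_zero : ∀ x : ZMod 2, x ≠ 1 → x = 0 := by decide

private lemma pair_sym_eq : ∀ u w : ZMod 2 × ZMod 2, u ≠ 0 → w ≠ 0 →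
    u.1 * w.2 + u.2 * w.1 = 0 → u.1 * w.2 + u.2 * w.1 = w.1 * u.2 + w.2 * u.1 := by
  decide

/-- Let `G` be a subgroup of the `n`-qubit Pauli group such that every
nontrivial element of the stabilizer `S = G ∩ Z(G)` has weight at least `2`,
and such that for every qubit `q` and every single-qubit Pauli error `σ`
supported on `q` there is an element of `S` anticommuting with `σ`.  Then for
every generating set `Γ` of `G` and every qubit `q`, there are two elements of
`Γ` supported on `q` whose restrictions to `q` anticommute. -/
theorem gauge_generators_anticommute_on_each_qubit
    (n : ℕ) (G : AddSubgroup (PauliVec n))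
    (hSwt : ∀ s ∈ G, (∀ g ∈ G, omega s g = 0) → s ≠ 0 →
      2 ≤ (Finset.univ.filter fun q : Fin n => s.1 q ≠ 0 ∨ s.2 q ≠ 0).card)
    (hdet : ∀ q : Fin n, ∀ σ : PauliVec n,
      (∀ p : Fin n, p ≠ q → σ.1 p = 0 ∧ σ.2 p = 0) →
      (σ.1 q ≠ 0 ∨ σ.2 q ≠ 0) →
      ∃ s ∈ G, (∀ g ∈ G, omega s g = 0) ∧ omega s σ = 1) :
    ∀ Γ : Set (PauliVec n), AddSubgroup.closure Γ = G →
      ∀ q : Fin n, ∃ g₁ ∈ Γ, ∃ g₂ ∈ Γ,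
        (g₁.1 q ≠ 0 ∨ g₁.2 q ≠ 0) ∧ (g₂.1 q ≠ 0 ∨ g₂.2 q ≠ 0) ∧
        g₁.1 q * g₂.2 q + g₁.2 q * g₂.1 q = 1 := by
  intro Γ hΓ q
  by_contra hcon
  push_neg at hcon
  -- hcon : ∀ g₁ ∈ Γ, ∀ g₂ ∈ Γ, nz g₁ → nz g₂ → expr ≠ 1
  -- Step 1: find a nonzero w : (ZMod 2)² commuting (symplectically) with the
  -- restriction of every generator at q.
  obtain ⟨w, hw, hwΓ⟩ : ∃ w : ZMod 2 × ZMod 2, w ≠ 0 ∧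
      ∀ g ∈ Γ, g.1 q * w.2 + g.2 q * w.1 = 0 := by
    by_cases hex : ∃ g₀ ∈ Γ, ((g₀.1 q, g₀.2 q) : ZMod 2 × ZMod 2) ≠ 0
    · obtain ⟨g₀, hg₀, hne⟩ := hex
      refine ⟨(g₀.1 q, g₀.2 q), hne, ?_⟩
      intro g hg
      by_cases hgz : ((g.1 q, g.2 q) : ZMod 2 × ZMod 2) = 0
      · have h1 : g.1 q = 0 := congrArg Prod.fst hgz
        have h2 : g.2 q = 0 := congrArg Prod.snd hgz
        simp [h1, h2]
      · have hgz' : g.1 q ≠ 0 ∨ g.2 q ≠ 0 := by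
          by_contra h
          push_neg at h
          exact hgz (Prod.ext h.1 h.2)
        have hne' : g₀.1 q ≠ 0 ∨ g₀.2 q ≠ 0 := by
          by_contra h
          push_neg at h
          exact hne (Prod.ext h.1 h.2)
        exact zmod2_ne_one_eq_zero _ (hcon g hg g₀ hg₀ hgz' hne')
    · refine ⟨(1, 0), by decide, ?_⟩
      intro g hg
      push_neg at hex
      have := hex g hg
      have h1 : g.1 q = 0 := congrArg Prod.fst this
      have h2 : g.2 q = 0 := congrArg Prod.snd this
      simp [h1, h2]
  -- Step 2: the commuting condition is linear, hence holds for all of G.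
  set H : AddSubgroup (PauliVec n) :=
    { carrier := {g | g.1 q * w.2 + g.2 q * w.1 = 0}
      zero_mem' := by simp
      add_mem' := by
        intro a b ha hb
        simp only [Set.mem_setOf_eq] at ha hb ⊢
        have : (a + b).1 q * w.2 + (a + b).2 q * w.1 =
            (a.1 q * w.2 + a.2 q * w.1) + (b.1 q * w.2 + b.2 q * w.1) := by
          show (a.1 q + b.1 q) * w.2 + (a.2 q + b.2 q) * w.1 = _
          ring
        rw [this, ha, hb, add_zero]
      neg_mem' := by
        intro a ha
        simp only [Set.mem_setOf_eq] at ha ⊢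
        have : (-a).1 q * w.2 + (-a).2 q * w.1 =
            -(a.1 q * w.2 + a.2 q * w.1) := by
          show (-(a.1 q)) * w.2 + (-(a.2 q)) * w.1 = _
          ring
        rw [this, ha, neg_zero] } with hH
  have hGH : G ≤ H := by
    rw [← hΓ]
    exact AddSubgroup.closure_le H |>.mpr hwΓ
  -- Step 3: apply error detection to the single-qubit error w at q.
  set σ : PauliVec n :=
    (fun p => if p = q then w.1 else 0, fun p => if p = q then w.2 else 0) with hσ
  have hσsupp : ∀ p : Fin n, p ≠ q → σ.1 p = 0 ∧ σ.2 p = 0 := by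
    intro p hp
    constructor <;> simp [hσ, hp]
  have hσq : σ.1 q ≠ 0 ∨ σ.2 q ≠ 0 := by
    have : w.1 ≠ 0 ∨ w.2 ≠ 0 := by
      by_contra h
      push_neg at h
      exact hw (Prod.ext h.1 h.2)
    simpa [hσ] using this
  obtain ⟨s, hsG, _, hsσ⟩ := hdet q σ hσsupp hσq
  have hcalc : omega s σ = s.1 q * w.2 + s.2 q * w.1 := by
    unfold omega
    rw [Finset.sum_eq_single q]
    · simp [hσ]
    · intro p _ hp
      simp [hσ, hp]
    · intro h
      exact absurd (Finset.mem_univ q) h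
  have hzero : s.1 q * w.2 + s.2 q * w.1 = 0 := hGH hsG
  rw [hcalc, hzero] at hsσ
  exact zero_ne_one hsσ
end
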